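/- Let (S,d) be a compact metric space, let r ∈ ℕ, let λ_{−r}, …, λ_r ∈ [0,1] be weights with Σ_{k=−r}^{r} λ_k = 1, and let T : M(S) → M(S) be a map on Borel probability measures. Suppose T satisfies the average Lipschitz property: there is a constant c ≥ 0 such that for all configurations x, y ∈ M(S)^ℤ and all i ∈ ℤ, Σ_{k=−r}^{r} λ_k · d_MK(T(x_{i+k}), T(y_{i+k})) ≤ c · d_MK(x_i, y_i). Then the convex combination map δ_C : M(S)^ℤ → M(S)^ℤ defined by (δ_C(x))_i = Σ_{k=−r}^{r} λ_k · T(x_{i+k}) is Lipschitz with respect to d_M with Lipschitz constant c: d_M(δ_C(x), δ_C(y)) ≤ c · d_M(x, y) for all x, y. -/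

import Mathlib

open MeasureTheory Filter

/-- The Monge–Kantorovich distance between two Borel probability measures on a metric
space `S`: the supremum of `∫ f dμ - ∫ f dν` over all `1`-Lipschitz functions `f : S → ℝ`. -/
noncomputable def dMK {S : Type*} [MetricSpace S] [MeasurableSpace S]
    (μ ν : ProbabilityMeasure S) : ℝ :=
  sSup {r : ℝ | ∃ f : S → ℝ, LipschitzWith 1 f ∧
    r = ∫ x, f x ∂(μ : Measure S) - ∫ x, f x ∂(ν : Measure S)}

/-- The distance `d_M(x, y) = Σ_{i ∈ ℤ} d_MK(x_i, y_i) / 2^{|i|}` between two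
configurations of probability measures indexed by `ℤ`. -/
noncomputable def dM {S : Type*} [MetricSpace S] [MeasurableSpace S]
    (x y : ℤ → ProbabilityMeasure S) : ℝ :=
  ∑' i : ℤ, dMK (x i) (y i) / 2 ^ |i|

/-- Convex combination of probability measures with nonnegative weights summing to 1:
the probability measure `A ↦ Σ_k λ_k μ_k(A)`. -/
noncomputable def convexComb {S : Type*} [MeasurableSpace S] {ι : Type*} (t : Finset ι)
    (lam : ι → ℝ) (hlam : ∀ k ∈ t, 0 ≤ lam k) (hsum : ∑ k ∈ t, lam k = 1)
    (μ : ι → ProbabilityMeasure S) : ProbabilityMeasure S :=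
  ⟨∑ k ∈ t, ENNReal.ofReal (lam k) • (μ k : Measure S), by
    constructor
    have h : (∑ k ∈ t, ENNReal.ofReal (lam k) • (μ k : Measure S)) Set.univ
        = ∑ k ∈ t, ENNReal.ofReal (lam k) := by
      rw [Measure.finset_sum_apply]
      simp [Measure.smul_apply, measure_univ]
    rw [h, ← ENNReal.ofReal_sum_of_nonneg hlam, hsum, ENNReal.ofReal_one]⟩

/-- The convex combination local rule `δ_C` with radius `r`, weights `λ_{-r}, …, λ_r`
and map `T` on probability measures: `(δ_C(x))_i = Σ_{k=-r}^{r} λ_k · T(x_{i+k})`. -/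
noncomputable def deltaC {S : Type*} [MeasurableSpace S] (r : ℕ) (lam : ℤ → ℝ)
    (hlam : ∀ k ∈ Finset.Icc (-(r : ℤ)) (r : ℤ), 0 ≤ lam k)
    (hsum : ∑ k ∈ Finset.Icc (-(r : ℤ)) (r : ℤ), lam k = 1)
    (T : ProbabilityMeasure S → ProbabilityMeasure S)
    (x : ℤ → ProbabilityMeasure S) : ℤ → ProbabilityMeasure S :=
  fun i => convexComb (Finset.Icc (-(r : ℤ)) (r : ℤ)) lam hlam hsum
    (fun k => T (x (i + k)))

/-!
Integrating a `1`-Lipschitz test function against a convex combination of measures is linear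
in the weights, so `d_MK((δ_C x)_i, (δ_C y)_i) ≤ Σ_k λ_k d_MK(T x_{i+k}, T y_{i+k})`, which the
average Lipschitz property bounds by `c · d_MK(x_i, y_i)`. Summing against `2^{-|i|}` gives the
claim; on a compact space `d_MK` is at most twice the diameter, so every series converges.
-/

namespace MongeKantorovich

variable {S : Type*} [MetricSpace S] [MeasurableSpace S]

lemma dMK_nonneg (μ ν : ProbabilityMeasure S) : 0 ≤ dMK μ ν :=
  Real.sSup_nonneg' ⟨0, ⟨fun _ => 0, LipschitzWith.const' 0, by simp⟩, le_rfl⟩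

lemma dMK_le_of_forall_le {μ ν : ProbabilityMeasure S} {C : ℝ}
    (h : ∀ f : S → ℝ, LipschitzWith 1 f →
      ∫ x, f x ∂(μ : Measure S) - ∫ x, f x ∂(ν : Measure S) ≤ C) :
    dMK μ ν ≤ C :=
  csSup_le ⟨0, fun _ => 0, LipschitzWith.const' 0, by simp⟩ fun _ ⟨f, hf, hr⟩ => hr ▸ h f hf

variable [CompactSpace S] [BorelSpace S]

lemma _root_.LipschitzWith.integrable_of_compactSpace {f : S → ℝ} {K : NNReal}
    (hf : LipschitzWith K f) (μ : Measure S) [IsFiniteMeasure μ] : Integrable f μ :=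
  hf.continuous.integrable_of_hasCompactSupport (HasCompactSupport.of_compactSpace f)

lemma abs_integral_sub_le_diam {f : S → ℝ} (hf : LipschitzWith 1 f)
    (μ : ProbabilityMeasure S) (x₀ : S) :
    |∫ x, f x ∂(μ : Measure S) - f x₀| ≤ Metric.diam (Set.univ : Set S) := by
  have hshift : ∫ x, f x ∂(μ : Measure S) - f x₀ = ∫ x, (f x - f x₀) ∂(μ : Measure S) := by
    rw [integral_sub (hf.integrable_of_compactSpace _) (integrable_const _), integral_const,
      probReal_univ, one_smul]
  have hbound : ∀ x, ‖f x - f x₀‖ ≤ Metric.diam (Set.univ : Set S) := fun x =>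
    calc ‖f x - f x₀‖ ≤ dist x x₀ := by simpa [Real.dist_eq] using hf.dist_le_mul x x₀
      _ ≤ _ := Metric.dist_le_diam_of_mem isCompact_univ.isBounded trivial trivial
  rw [hshift, ← Real.norm_eq_abs]
  simpa using norm_integral_le_of_norm_le_const (μ := (μ : Measure S)) (ae_of_all _ hbound)

lemma integral_sub_integral_le_two_mul_diam {f : S → ℝ} (hf : LipschitzWith 1 f)
    (μ ν : ProbabilityMeasure S) :
    ∫ x, f x ∂(μ : Measure S) - ∫ x, f x ∂(ν : Measure S)
      ≤ 2 * Metric.diam (Set.univ : Set S) := by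
  obtain ⟨x₀⟩ := nonempty_of_isProbabilityMeasure (μ : Measure S)
  have hμ := (abs_le.1 (abs_integral_sub_le_diam hf μ x₀)).2
  have hν := (abs_le.1 (abs_integral_sub_le_diam hf ν x₀)).1
  linarith

lemma dMK_le_two_mul_diam (μ ν : ProbabilityMeasure S) :
    dMK μ ν ≤ 2 * Metric.diam (Set.univ : Set S) :=
  dMK_le_of_forall_le fun _ hf => integral_sub_integral_le_two_mul_diam hf μ ν

lemma integral_sub_integral_le_dMK {f : S → ℝ} (hf : LipschitzWith 1 f)
    (μ ν : ProbabilityMeasure S) :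
    ∫ x, f x ∂(μ : Measure S) - ∫ x, f x ∂(ν : Measure S) ≤ dMK μ ν :=
  le_csSup ⟨_, fun _ ⟨_, hg, hr⟩ => hr ▸ integral_sub_integral_le_two_mul_diam hg μ ν⟩
    ⟨f, hf, rfl⟩

lemma integral_convexComb {ι : Type*} (t : Finset ι) (lam : ι → ℝ)
    (hlam : ∀ k ∈ t, 0 ≤ lam k) (hsum : ∑ k ∈ t, lam k = 1)
    (μ : ι → ProbabilityMeasure S) {f : S → ℝ} {K : NNReal} (hf : LipschitzWith K f) :
    ∫ x, f x ∂(convexComb t lam hlam hsum μ : Measure S)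
      = ∑ k ∈ t, lam k * ∫ x, f x ∂(μ k : Measure S) := by
  change ∫ x, f x ∂(∑ k ∈ t, ENNReal.ofReal (lam k) • (μ k : Measure S)) = _
  rw [integral_finsetSum_measure fun k _ =>
    (hf.integrable_of_compactSpace _).smul_measure ENNReal.ofReal_ne_top]
  refine Finset.sum_congr rfl fun k hk => ?_
  rw [integral_smul_measure, ENNReal.toReal_ofReal (hlam k hk), smul_eq_mul]

lemma dMK_convexComb_le {ι : Type*} (t : Finset ι) (lam : ι → ℝ)
    (hlam : ∀ k ∈ t, 0 ≤ lam k) (hsum : ∑ k ∈ t, lam k = 1)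
    (μ ν : ι → ProbabilityMeasure S) :
    dMK (convexComb t lam hlam hsum μ) (convexComb t lam hlam hsum ν)
      ≤ ∑ k ∈ t, lam k * dMK (μ k) (ν k) := by
  refine dMK_le_of_forall_le fun f hf => ?_
  rw [integral_convexComb t lam hlam hsum μ hf, integral_convexComb t lam hlam hsum ν hf,
    ← Finset.sum_sub_distrib]
  gcongr with k hk
  rw [← mul_sub]
  exact mul_le_mul_of_nonneg_left (integral_sub_integral_le_dMK hf _ _) (hlam k hk)

lemma summable_dMK_div_two_pow_abs (x y : ℤ → ProbabilityMeasure S) :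
    Summable fun i : ℤ => dMK (x i) (y i) / 2 ^ |i| := by
  have hgeom : Summable fun i : ℤ => 2 * Metric.diam (Set.univ : Set S) / 2 ^ |i| := by
    apply Summable.of_nat_of_neg <;>
      simpa [abs_neg, div_eq_mul_inv] using summable_geometric_two.mul_left _
  refine hgeom.of_nonneg_of_le (fun i => by have := dMK_nonneg (x i) (y i); positivity)
    fun i => ?_
  gcongr
  exact dMK_le_two_mul_diam _ _

lemma dM_le_of_forall_dMK_le {x y x' y' : ℤ → ProbabilityMeasure S} {c : ℝ}
    (h : ∀ i, dMK (x' i) (y' i) ≤ c * dMK (x i) (y i)) : dM x' y' ≤ c * dM x y := by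
  rw [dM, dM, ← tsum_mul_left]
  refine Summable.tsum_le_tsum (fun i => ?_) (summable_dMK_div_two_pow_abs x' y')
    ((summable_dMK_div_two_pow_abs x y).mul_left c)
  rw [← mul_div_assoc]
  gcongr
  exact h i

end MongeKantorovich

theorem deltaC_lipschitz_of_average_lipschitz_general {S : Type*} [MetricSpace S] [CompactSpace S]
    [MeasurableSpace S] [BorelSpace S] (r : ℕ) (lam : ℤ → ℝ)
    (hlam : ∀ k ∈ Finset.Icc (-(r : ℤ)) (r : ℤ), 0 ≤ lam k)
    (hsum : ∑ k ∈ Finset.Icc (-(r : ℤ)) (r : ℤ), lam k = 1)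
    (T : ProbabilityMeasure S → ProbabilityMeasure S) (c : ℝ)
    (hT : ∀ (x y : ℤ → ProbabilityMeasure S) (i : ℤ),
      ∑ k ∈ Finset.Icc (-(r : ℤ)) (r : ℤ), lam k * dMK (T (x (i + k))) (T (y (i + k)))
        ≤ c * dMK (x i) (y i)) :
    ∀ x y : ℤ → ProbabilityMeasure S,
      dM (deltaC r lam hlam hsum T x) (deltaC r lam hlam hsum T y) ≤ c * dM x y :=
  fun x y => MongeKantorovich.dM_le_of_forall_dMK_le fun i =>
    (MongeKantorovich.dMK_convexComb_le _ lam hlam hsum _ _).trans (hT x y i)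

/-- If `T` satisfies the average Lipschitz property with constant `c`, then the convex
combination map `δ_C` is Lipschitz with respect to `d_M` with Lipschitz constant `c`. -/
theorem deltaC_lipschitz_of_average_lipschitz {S : Type*} [MetricSpace S] [CompactSpace S]
    [MeasurableSpace S] [BorelSpace S] (r : ℕ) (lam : ℤ → ℝ)
    (hlam : ∀ k ∈ Finset.Icc (-(r : ℤ)) (r : ℤ), 0 ≤ lam k)
    (hlam' : ∀ k ∈ Finset.Icc (-(r : ℤ)) (r : ℤ), lam k ≤ 1)
    (hsum : ∑ k ∈ Finset.Icc (-(r : ℤ)) (r : ℤ), lam k = 1)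
    (T : ProbabilityMeasure S → ProbabilityMeasure S) (c : ℝ) (hc : 0 ≤ c)
    (hT : ∀ (x y : ℤ → ProbabilityMeasure S) (i : ℤ),
      ∑ k ∈ Finset.Icc (-(r : ℤ)) (r : ℤ), lam k * dMK (T (x (i + k))) (T (y (i + k)))
        ≤ c * dMK (x i) (y i)) :
    ∀ x y : ℤ → ProbabilityMeasure S,
      dM (deltaC r lam hlam hsum T x) (deltaC r lam hlam hsum T y) ≤ c * dM x y :=
  deltaC_lipschitz_of_average_lipschitz_general r lam hlam hsum T c hT
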